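/- arXiv:1910.06587 — 4 statements merged into one kernel-verified Lean document; each statement's English description precedes it below -/
import Mathlib

section
/- Let L be a lattice in V, let U be a ℚ-subspace of V, and let π_U : V → V denote the orthogonal projection onto U (the projection with kernel U^⊥). Then L_U := L ∩ U is a lattice of full rank in U, and the dual lattice of L_U inside U (taken with respect to the restriction of the bilinear form to U) equals π_U(L^#). -/
open Submodule

/-- The dual lattice of `L` with respect to the bilinear form `B`. -/
def dualLattice {V : Type*} [AddCommGroup V] [Module ℚ V]
    (B : V →ₗ[ℚ] V →ₗ[ℚ] ℚ) (L : Submodule ℤ V) : Submodule ℤ V where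
  carrier := {v | ∀ l ∈ L, ∃ k : ℤ, B v l = (k : ℚ)}
  zero_mem' := fun l _ => ⟨0, by simp⟩
  add_mem' := by
    intro a b ha hb l hl
    obtain ⟨k₁, hk₁⟩ := ha l hl
    obtain ⟨k₂, hk₂⟩ := hb l hl
    exact ⟨k₁ + k₂, by push_cast; simp [hk₁, hk₂]⟩
  smul_mem' := by
    intro n a ha l hl
    obtain ⟨k, hk⟩ := ha l hl
    exact ⟨n * k, by push_cast; simp [hk]⟩

/-!
Pushing `v ∈ L^#` to `π v` keeps the pairing with `L ∩ U`, because `v - π v` is orthogonal to `U`.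
Conversely, `L ∩ U` is saturated in `L`, so `L ⧸ (L ∩ U)` is finitely generated and torsion-free,
hence free, and `L ∩ U` is a direct summand of `L` with a retraction `p`. For `w ∈ (L ∩ U)^#` the
functional `B w ∘ p` is integral on `L`; since `V` is the localization of `L` it extends
`ℚ`-linearly to `V`, and nondegeneracy writes it as `B v` with `v ∈ L^#`. Then `B v` and `B w`
agree on `L ∩ U`, which spans `U`, and positivity forces `π v = w`.
-/

open nonZeroDivisors

theorem Submodule.exists_retraction_of_projective_quotient {R M : Type*} [Ring R]
    [AddCommGroup M] [Module R M] (N : Submodule R M) [Module.Projective R (M ⧸ N)] :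
    ∃ p : M →ₗ[R] N, ∀ x : N, p x = x := by
  obtain ⟨s, hs⟩ := N.mkQ.exists_rightInverse_of_surjective N.range_mkQ
  have hsection : ∀ y, N.mkQ (s y) = y := LinearMap.congr_fun hs
  refine ⟨(LinearMap.id - s ∘ₗ N.mkQ).codRestrict N fun x => ?mem, fun x => Subtype.ext ?id⟩
  case mem =>
    rw [← Quotient.mk_eq_zero, LinearMap.sub_apply, LinearMap.id_apply, LinearMap.comp_apply,
      Quotient.mk_sub, ← mkQ_apply N (s _), hsection, mkQ_apply, sub_self]
  case id => simp [(Quotient.mk_eq_zero N).mpr x.2]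

section RationalSpan

variable {V : Type*} [AddCommGroup V] [Module ℚ V]

theorem Submodule.exists_smul_mem_of_mem_span_rat {K : Submodule ℤ V} {x : V}
    (hx : x ∈ span ℚ (K : Set V)) : ∃ n : ℤ⁰, (n : ℤ) • x ∈ K := by
  obtain ⟨y, hy, n, rfl⟩ := (IsLocalization.mem_span_iff (S := ℚ) ℤ⁰).mp hx
  refine ⟨n, ?_⟩
  rw [span_eq] at hy
  rwa [← Int.cast_smul_eq_zsmul ℚ, smul_smul, ← eq_intCast (algebraMap ℤ ℚ),
    IsLocalization.mul_mk'_eq_mk'_of_mul, mul_one, IsLocalization.mk'_self, one_smul]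

theorem Submodule.isLocalizedModule_subtype_of_span_rat_eq_top {K : Submodule ℤ V}
    (hK : span ℚ (K : Set V) = ⊤) : IsLocalizedModule ℤ⁰ K.subtype where
  map_units := (isLocalizedModule_id ℤ⁰ V ℚ).map_units
  surj y := by
    obtain ⟨n, hn⟩ := exists_smul_mem_of_mem_span_rat (hK ▸ mem_top : y ∈ span ℚ (K : Set V))
    exact ⟨(⟨_, hn⟩, n), rfl⟩
  exists_of_eq h := ⟨1, by rw [Subtype.ext h]⟩

theorem Submodule.exists_linearMap_extend_of_span_rat_eq_top {Q : Type*} [AddCommGroup Q]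
    [Module ℚ Q] {K : Submodule ℤ V} (hK : span ℚ (K : Set V) = ⊤) (g : K →ₗ[ℤ] Q) :
    ∃ φ : V →ₗ[ℚ] Q, ∀ x : K, φ x = g x :=
  have := isLocalizedModule_subtype_of_span_rat_eq_top hK
  let h := IsLocalizedModule.isBaseChange ℤ⁰ ℚ K.subtype
  ⟨h.lift g, h.lift_eq g⟩

theorem Submodule.span_rat_inf_restrictScalars {K : Submodule ℤ V}
    (hK : span ℚ (K : Set V) = ⊤) (U : Submodule ℚ V) :
    span ℚ ((K ⊓ U.restrictScalars ℤ : Submodule ℤ V) : Set V) = U := by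
  refine le_antisymm (span_le.mpr fun x hx => hx.2) fun u hu => ?_
  obtain ⟨n, hn⟩ := exists_smul_mem_of_mem_span_rat (hK ▸ mem_top : u ∈ span ℚ (K : Set V))
  have hnu : (n : ℤ) • u ∈ K ⊓ U.restrictScalars ℤ := ⟨hn, U.smul_of_tower_mem _ hu⟩
  have : (n : ℤ) • u ∈ span ℚ ((K ⊓ U.restrictScalars ℤ : Submodule ℤ V) : Set V) :=
    subset_span hnu
  have hn0 : (n : ℚ) ≠ 0 := by exact_mod_cast nonZeroDivisors.coe_ne_zero n
  rwa [← Int.cast_smul_eq_zsmul ℚ, smul_mem_iff _ hn0] at this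

theorem Submodule.isTorsionFree_quotient_comap_restrictScalars (K : Submodule ℤ V)
    (U : Submodule ℚ V) : Module.IsTorsionFree ℤ (K ⧸ (U.restrictScalars ℤ).comap K.subtype) := by
  refine .of_smul_eq_zero fun n x hx => or_iff_not_imp_left.mpr fun hn => ?_
  obtain ⟨x, rfl⟩ := Quotient.mk_surjective _ x
  rw [← Quotient.mk_smul, Quotient.mk_eq_zero] at hx
  rw [Quotient.mk_eq_zero]
  simp only [mem_comap, subtype_apply, restrictScalars_mem, SetLike.val_smul] at hx ⊢
  rwa [← Int.cast_smul_eq_zsmul ℚ, smul_mem_iff _ (by exact_mod_cast hn)] at hx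

end RationalSpan

section OrthogonalProjection

variable {R V : Type*} [CommRing R] [AddCommGroup V] [Module R V] {B : V →ₗ[R] V →ₗ[R] R}
  {U : Submodule R V} {π : V →ₗ[R] V}

theorem proj_apply_eq_of_forall_apply_eq (hB : ∀ x, B x x = 0 → x = 0)
    (hπmem : ∀ v, π v ∈ U) (hπperp : ∀ v, ∀ u ∈ U, B (v - π v) u = 0) {v w : V} (hw : w ∈ U)
    (h : ∀ u ∈ U, B v u = B w u) : π v = w := by
  have hz : π v - w ∈ U := U.sub_mem (hπmem v) hw
  refine sub_eq_zero.mp (hB _ ?_)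
  have hperp := hπperp v _ hz
  rw [LinearMap.map_sub₂, sub_eq_zero] at hperp
  rw [LinearMap.map_sub₂, ← hperp, h _ hz, sub_self]

end OrthogonalProjection

section DualLattice

variable {V : Type*} [AddCommGroup V] [Module ℚ V] {B : V →ₗ[ℚ] V →ₗ[ℚ] ℚ} {L : Submodule ℤ V}
  {U : Submodule ℚ V} {π : V →ₗ[ℚ] V}

theorem map_dualLattice_le_inf (hπmem : ∀ v, π v ∈ U)
    (hπperp : ∀ v, ∀ u ∈ U, B (v - π v) u = 0) :
    (dualLattice B L).map (π.restrictScalars ℤ) ≤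
      dualLattice B (L ⊓ U.restrictScalars ℤ) ⊓ U.restrictScalars ℤ := by
  rintro _ ⟨v, hv, rfl⟩
  refine ⟨fun l hl => ?_, hπmem v⟩
  obtain ⟨k, hk⟩ := hv l hl.1
  have hperp := hπperp v l hl.2
  rw [LinearMap.map_sub₂, sub_eq_zero] at hperp
  exact ⟨k, by rw [LinearMap.restrictScalars_apply, ← hperp, hk]⟩

theorem exists_forall_apply_eq_of_span_rat_eq_top [FiniteDimensional ℚ V]
    (hB : ∀ x, B x x = 0 → x = 0) (hL : span ℚ (L : Set V) = ⊤) (g : L →ₗ[ℤ] ℚ) :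
    ∃ v, ∀ l : L, B v l = g l := by
  have hBnd : B.Nondegenerate := ⟨fun x hx => hB x (hx x), fun y hy => hB y (hy y)⟩
  obtain ⟨φ, hφ⟩ := exists_linearMap_extend_of_span_rat_eq_top hL g
  exact ⟨(LinearMap.BilinForm.toDual B hBnd).symm φ, fun l => by
    rw [LinearMap.BilinForm.apply_toDual_symm_apply, hφ]⟩

theorem dualLattice_inf_le_map [FiniteDimensional ℚ V] (hB : ∀ x, B x x = 0 → x = 0)
    (hLfg : L.FG) (hLfull : span ℚ (L : Set V) = ⊤) (hπmem : ∀ v, π v ∈ U)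
    (hπperp : ∀ v, ∀ u ∈ U, B (v - π v) u = 0) :
    dualLattice B (L ⊓ U.restrictScalars ℤ) ⊓ U.restrictScalars ℤ ≤
      (dualLattice B L).map (π.restrictScalars ℤ) := by
  rintro w ⟨hw, hwU⟩
  have : Module.Finite ℤ L := Module.Finite.iff_fg.mpr hLfg
  have := L.isTorsionFree_quotient_comap_restrictScalars U
  obtain ⟨p, hp⟩ :=
    ((U.restrictScalars ℤ).comap L.subtype).exists_retraction_of_projective_quotient
  obtain ⟨v, hv⟩ := exists_forall_apply_eq_of_span_rat_eq_top hB hLfull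
    ((B w).restrictScalars ℤ ∘ₗ L.subtype ∘ₗ Submodule.subtype _ ∘ₗ p)
  refine ⟨v, fun l hl => ?_, ?_⟩
  · rw [hv ⟨l, hl⟩]
    exact hw _ ⟨(p ⟨l, hl⟩ : L).2, (p ⟨l, hl⟩).2⟩
  · refine proj_apply_eq_of_forall_apply_eq hB hπmem hπperp hwU fun u hu => ?_
    have hM : Set.EqOn (B v) (B w) (L ⊓ U.restrictScalars ℤ : Submodule ℤ V) := fun m hm => by
      simp [hv ⟨m, hm.1⟩, hp ⟨⟨m, hm.1⟩, hm.2⟩]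
    rw [← span_rat_inf_restrictScalars hLfull U] at hu
    exact LinearMap.eqOn_span' hM hu

end DualLattice

theorem dual_of_intersection_eq_proj_of_dual_general
    {V : Type*} [AddCommGroup V] [Module ℚ V] [FiniteDimensional ℚ V]
    (B : V →ₗ[ℚ] V →ₗ[ℚ] ℚ)
    (hBpos : ∀ x, x ≠ 0 → 0 < B x x)
    -- `L` is a lattice in `V`, i.e. a finitely generated `ℤ`-submodule of full rank
    (L : Submodule ℤ V) (hLfg : L.FG)
    (hLfull : Submodule.span ℚ (L : Set V) = ⊤)
    -- a subspace `U` of `V` and the orthogonal projection `π` onto `U` (kernel `Uᗮ`)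
    (U : Submodule ℚ V) (π : V →ₗ[ℚ] V)
    (hπmem : ∀ v, π v ∈ U)
    (hπperp : ∀ v, ∀ u ∈ U, B (v - π v) u = 0) :
    (L ⊓ U.restrictScalars ℤ).FG ∧
    Submodule.span ℚ ((L ⊓ U.restrictScalars ℤ : Submodule ℤ V) : Set V) = U ∧
    dualLattice B (L ⊓ U.restrictScalars ℤ) ⊓ U.restrictScalars ℤ
      = (dualLattice B L).map (π.restrictScalars ℤ) := by
  have hB : ∀ x, B x x = 0 → x = 0 := fun x hx => by_contra fun h => (hBpos x h).ne' hx
  exact ⟨hLfg.of_le inf_le_left, span_rat_inf_restrictScalars hLfull U,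
    (dualLattice_inf_le_map hB hLfg hLfull hπmem hπperp).antisymm
      (map_dualLattice_le_inf hπmem hπperp)⟩

/-- Proposition 1.3.4: `L ∩ U` is a full lattice in `U` and its dual lattice taken inside `U`
(with respect to the restriction of the form) is the image of `L^#` under the orthogonal
projection onto `U`. -/
theorem dual_of_intersection_eq_proj_of_dual
    {V : Type*} [AddCommGroup V] [Module ℚ V] [FiniteDimensional ℚ V]
    (B : V →ₗ[ℚ] V →ₗ[ℚ] ℚ)
    (hBsymm : ∀ x y, B x y = B y x)
    (hBpos : ∀ x, x ≠ 0 → 0 < B x x)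
    -- `L` is a lattice in `V`, i.e. a finitely generated `ℤ`-submodule of full rank
    (L : Submodule ℤ V) (hLfg : L.FG)
    (hLfull : Submodule.span ℚ (L : Set V) = ⊤)
    -- a subspace `U` of `V` and the orthogonal projection `π` onto `U` (kernel `Uᗮ`)
    (U : Submodule ℚ V) (π : V →ₗ[ℚ] V)
    (hπmem : ∀ v, π v ∈ U)
    (hπid : ∀ u ∈ U, π u = u)
    (hπperp : ∀ v, ∀ u ∈ U, B (v - π v) u = 0) :
    (L ⊓ U.restrictScalars ℤ).FG ∧
    Submodule.span ℚ ((L ⊓ U.restrictScalars ℤ : Submodule ℤ V) : Set V) = U ∧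
    dualLattice B (L ⊓ U.restrictScalars ℤ) ⊓ U.restrictScalars ℤ
      = (dualLattice B L).map (π.restrictScalars ℤ) :=
  dual_of_intersection_eq_proj_of_dual_general B hBpos L hLfg hLfull U π hπmem hπperp
end

section
/- Let L be a lattice in V and σ ∈ Aut(L) of prime order p. Then L^#·e₁ equals the dual lattice of L₁ taken inside V₁ (with respect to the restriction of the bilinear form to V₁), and L^#·e_ζ equals the dual lattice of L_ζ taken inside V_ζ (with respect to the restriction of the bilinear form to V_ζ). -/
/-!
Both `e₁` and `e_ζ = 1 - e₁` are idempotents that are self-adjoint for `B`: `e₁` averages the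
isometry `σ` over the cyclic group it generates, so `e₁ x` is `σ`-fixed and pairing against it
commutes with averaging. It therefore suffices to show, for any self-adjoint idempotent `f`, that
`f(L^#)` is the dual of `L ∩ range f` inside `range f`. One inclusion is immediate. Conversely, let
`w ∈ range f` pair integrally with `L ∩ range f = L ∩ ker (1 - f)`. The image `(1 - f) L` is a
finitely generated torsion-free, hence free, `ℤ`-module, so `L → (1 - f) L` has a section; through it
one finds a `ℚ`-linear `χ` with `B w l + χ ((1 - f) l) ∈ ℤ` for all `l ∈ L`. Representing
`χ ∘ (1 - f)` as `B u` by nondegeneracy, `w + (1 - f) u` lies in `L^#` and is mapped to `w` by `f`.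
-/

open Submodule

open Finset LinearMap

section CyclicAverage

variable (K : Type*) {A : Type*} [Field K] [Ring A] [Algebra K A]

def cyclicAverage (n : ℕ) (a : A) : A :=
  (n : K)⁻¹ • ∑ i ∈ range n, a ^ i

variable {K} {a : A} {n : ℕ}

theorem mul_geom_sum_of_pow_eq_one (ha : a ^ n = 1) :
    a * ∑ i ∈ range n, a ^ i = ∑ i ∈ range n, a ^ i := by
  simpa [sub_mul, sub_eq_zero, ha] using mul_geom_sum a n

theorem pow_mul_cyclicAverage (ha : a ^ n = 1) (k : ℕ) :
    a ^ k * cyclicAverage K n a = cyclicAverage K n a := by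
  induction k with
  | zero => rw [pow_zero, one_mul]
  | succ k ih =>
    rw [pow_succ, mul_assoc, cyclicAverage, mul_smul_comm, mul_geom_sum_of_pow_eq_one ha,
      ← cyclicAverage, ih]

theorem isIdempotentElem_cyclicAverage (ha : a ^ n = 1) (hn : (n : K) ≠ 0) :
    IsIdempotentElem (cyclicAverage K n a) := by
  have hsum : (∑ i ∈ range n, a ^ i) * cyclicAverage K n a = (n : K) • cyclicAverage K n a := by
    rw [sum_mul, sum_congr rfl fun i _ ↦ pow_mul_cyclicAverage ha i, sum_const, card_range,
      Nat.cast_smul_eq_nsmul]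
  rw [IsIdempotentElem, cyclicAverage, smul_mul_assoc, ← cyclicAverage, hsum, smul_smul,
    inv_mul_cancel₀ hn, one_smul]

end CyclicAverage

section Isometry

variable {K V : Type*} [Field K] [AddCommGroup V] [Module K V] {B : V →ₗ[K] V →ₗ[K] K}
  {σ : Module.End K V}

theorem pow_apply_pow_apply (hσB : ∀ x y, B (σ x) (σ y) = B x y) (k : ℕ) (x y : V) :
    B ((σ ^ k) x) ((σ ^ k) y) = B x y := by
  induction k generalizing x y with
  | zero => rfl
  | succ k ih => rw [pow_succ, Module.End.mul_apply, Module.End.mul_apply, ih, hσB]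

theorem cyclicAverage_apply (n : ℕ) (x : V) :
    cyclicAverage K n σ x = (n : K)⁻¹ • ∑ i ∈ range n, (σ ^ i) x := by
  simp [cyclicAverage, LinearMap.sum_apply]

theorem isAdjointPair_cyclicAverage (hσB : ∀ x y, B (σ x) (σ y) = B x y) {n : ℕ}
    (hσn : σ ^ n = 1) (hn : (n : K) ≠ 0) :
    B.IsAdjointPair B ⇑(cyclicAverage K n σ) ⇑(cyclicAverage K n σ) := by
  set e := cyclicAverage K n σ
  have hfix (i : ℕ) (x : V) : (σ ^ i) (e x) = e x := congr($(pow_mul_cyclicAverage hσn i) x)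
  have hright (x z : V) : B (e x) (e z) = B (e x) z :=
    calc B (e x) (e z) = (n : K)⁻¹ * ∑ i ∈ range n, B ((σ ^ i) (e x)) ((σ ^ i) z) := by
          simp only [hfix, e, cyclicAverage_apply n z, map_smul, map_sum, smul_eq_mul]
      _ = B (e x) z := by simp [pow_apply_pow_apply hσB, hn]
  have hleft (x z : V) : B (e z) (e x) = B z (e x) :=
    calc B (e z) (e x) = (n : K)⁻¹ * ∑ i ∈ range n, B ((σ ^ i) z) ((σ ^ i) (e x)) := by
          simp only [hfix, e, cyclicAverage_apply n z, map_smul, map_sum, smul_eq_mul,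
            LinearMap.smul_apply, LinearMap.sum_apply]
      _ = B z (e x) := by simp [pow_apply_pow_apply hσB, hn]
  intro x y
  rw [← hright, hleft]

end Isometry

theorem LinearMap.BilinForm.nondegenerate_of_pos {R M : Type*} [CommSemiring R] [PartialOrder R]
    [AddCommMonoid M] [Module R M] {B : LinearMap.BilinForm R M}
    (hB : ∀ x, x ≠ 0 → 0 < B x x) : B.Nondegenerate :=
  ⟨fun x hx ↦ by_contra fun h ↦ (hB x h).ne' (hx x),
    fun y hy ↦ by_contra fun h ↦ (hB y h).ne' (hy y)⟩

section FractionRing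

variable {R V : Type*} [CommRing R] [IsDomain R] [IsPrincipalIdealRing R] [AddCommGroup V]
  [Module R V]

theorem Submodule.free_of_fg (K : Type*) [Field K] [Algebra R K] [IsFractionRing R K]
    [Module K V] [IsScalarTower R K V] {M : Submodule R V} (hM : M.FG) : Module.Free R M :=
  have : Module.Finite R M := Module.Finite.iff_fg.mpr hM
  have : Module.IsTorsionFree R V := .trans_faithfulSMul R K V
  Module.free_of_finite_type_torsion_free'

variable {K W : Type*} [Field K] [Algebra R K] [IsFractionRing R K] [Module K V]
  [IsScalarTower R K V] [AddCommGroup W] [Module K W] [Module R W] [IsScalarTower R K W]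

theorem Submodule.exists_linearMap_extend_of_fg {M : Submodule R V} (hM : M.FG)
    (θ : M →ₗ[R] K) : ∃ χ : V →ₗ[K] K, ∀ m : M, χ m = θ m := by
  have := free_of_fg K hM
  let b := Module.Free.chooseBasis R M
  have hb : LinearIndependent K (fun i ↦ (b i : V)) :=
    (LinearIndependent.iff_fractionRing R K).mp (b.linearIndependent.map' M.subtype M.ker_subtype)
  obtain ⟨χ, hχ⟩ := LinearMap.exists_extend ((Module.Basis.span hb).constr K fun i ↦ θ (b i))
  refine ⟨χ, fun m ↦ congr($(b.ext (f₁ := (χ.restrictScalars R).comp M.subtype) fun i ↦ ?_) m)⟩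
  have := congr($hχ (Module.Basis.span hb i))
  rwa [Module.Basis.constr_basis, LinearMap.comp_apply, Submodule.subtype_apply,
    Module.Basis.span_apply] at this

theorem exists_add_comp_mem_range_algebraMap {L : Submodule R V} (hL : L.FG) (g : V →ₗ[K] W)
    (φ : L →ₗ[R] K) (hφ : ∀ l : L, g l = 0 → φ l ∈ Set.range (algebraMap R K)) :
    ∃ χ : W →ₗ[K] K, ∀ l : L, φ l + χ (g l) ∈ Set.range (algebraMap R K) := by
  let gL := (g.restrictScalars R).submoduleMap L
  have : Module.Free R (L.map (g.restrictScalars R)) := free_of_fg K (hL.map _)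
  obtain ⟨s, hs⟩ := Module.projective_lifting_property gL LinearMap.id
    (LinearMap.submoduleMap_surjective _ _)
  obtain ⟨χ, hχ⟩ := exists_linearMap_extend_of_fg (K := K) (hL.map _) (-(φ ∘ₗ s))
  refine ⟨χ, fun l ↦ ?_⟩
  have hsl : g (s (gL l)) = g l := congr(($hs (gL l) : W))
  have hχl : χ (g l) = -φ (s (gL l)) := hχ (gL l)
  rw [hχl, ← sub_eq_add_neg, ← map_sub]
  exact hφ _ (by rw [Submodule.coe_sub, map_sub, hsl, sub_self])

end FractionRing

section DualLattice

variable {V : Type*} [AddCommGroup V] [Module ℚ V] {B : V →ₗ[ℚ] V →ₗ[ℚ] ℚ} {L : Submodule ℤ V}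
  {f : Module.End ℚ V}

theorem map_dualLattice_le (hf : IsIdempotentElem f) (hfB : B.IsAdjointPair B f f) :
    (dualLattice B L).map (f.restrictScalars ℤ)
      ≤ dualLattice B (L ⊓ (range f).restrictScalars ℤ) ⊓ (range f).restrictScalars ℤ := by
  rintro _ ⟨v, hv, rfl⟩
  refine ⟨fun l ⟨hlL, hlf⟩ ↦ ?_, ⟨v, rfl⟩⟩
  obtain ⟨k, hk⟩ := hv l hlL
  exact ⟨k, by rw [LinearMap.restrictScalars_apply, hfB, hf.mem_range_iff.mp hlf, hk]⟩

theorem exists_mem_dualLattice_apply_eq [FiniteDimensional ℚ V] (hB : B.Nondegenerate)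
    (hL : L.FG) (hf : IsIdempotentElem f) (hfB : B.IsAdjointPair B f f) {w : V}
    (hw : w ∈ dualLattice B (L ⊓ (range f).restrictScalars ℤ)) :
    ∃ v ∈ dualLattice B L, f v = f w := by
  set g : Module.End ℚ V := 1 - f
  have hgB : B.IsAdjointPair B g g := isAdjointPair_one.sub hfB
  obtain ⟨χ, hχ⟩ := exists_add_comp_mem_range_algebraMap hL g
    ((B w).restrictScalars ℤ ∘ₗ L.subtype) fun l hl ↦ by
      obtain ⟨k, hk⟩ := hw l ⟨l.2, hf.mem_range_iff.mpr (sub_eq_zero.mp hl).symm⟩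
      exact ⟨k, by simp [hk]⟩
  -- `u` represents `χ ∘ g`, so `w + g u` pairs with `l ∈ L` as `B w l + χ (g l)`.
  let u := (BilinForm.toDual B hB).symm (χ ∘ₗ g)
  have hu (y : V) : B u y = χ (g y) := by
    rw [← BilinForm.toDual_def hB, LinearEquiv.apply_symm_apply, LinearMap.comp_apply]
  refine ⟨w + g u, fun l hl ↦ ?_, ?_⟩
  · obtain ⟨k, hk⟩ := hχ ⟨l, hl⟩
    refine ⟨k, ?_⟩
    rw [map_add, LinearMap.add_apply, hgB, hu, ← Module.End.mul_apply, hf.one_sub.eq]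
    exact hk.symm
  · rw [map_add, ← Module.End.mul_apply f g, hf.mul_one_sub_self, LinearMap.zero_apply, add_zero]

theorem map_dualLattice_eq [FiniteDimensional ℚ V] (hB : B.Nondegenerate) (hL : L.FG)
    (hf : IsIdempotentElem f) (hfB : B.IsAdjointPair B f f) :
    (dualLattice B L).map (f.restrictScalars ℤ)
      = dualLattice B (L ⊓ (range f).restrictScalars ℤ) ⊓ (range f).restrictScalars ℤ := by
  refine (map_dualLattice_le hf hfB).antisymm fun w ⟨hw, hwf⟩ ↦ ?_
  obtain ⟨v, hv, hvw⟩ := exists_mem_dualLattice_apply_eq hB hL hf hfB hw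
  exact ⟨v, hv, hvw.trans (hf.mem_range_iff.mp hwf)⟩

end DualLattice

theorem dual_proj_components_general
    {V : Type*} [AddCommGroup V] [Module ℚ V] [FiniteDimensional ℚ V]
    (B : V →ₗ[ℚ] V →ₗ[ℚ] ℚ)
    (hBpos : ∀ x, x ≠ 0 → 0 < B x x)
    (L : Submodule ℤ V) (hLfg : L.FG)
    -- `σ` is an automorphism of `L` of prime order `p`
    (p : ℕ) (hp : p.Prime)
    (σ : Module.End ℚ V)
    (hσB : ∀ x y, B (σ x) (σ y) = B x y)
    (hσp : σ ^ p = 1)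
    -- the idempotents `e₁`, `e_ζ` and the eigenspaces `V₁`, `V_ζ`
    (e1 eζ : Module.End ℚ V)
    (he1 : e1 = (p : ℚ)⁻¹ • ∑ i ∈ Finset.range p, σ ^ i)
    (heζ : eζ = 1 - e1)
    (V1 Vζ : Submodule ℚ V)
    (hV1 : V1 = LinearMap.range e1) (hVζ : Vζ = LinearMap.range eζ)
    (L1 Lζ : Submodule ℤ V)
    (hL1 : L1 = L ⊓ V1.restrictScalars ℤ)
    (hLζ : Lζ = L ⊓ Vζ.restrictScalars ℤ) :
    (dualLattice B L).map (e1.restrictScalars ℤ)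
      = dualLattice B L1 ⊓ V1.restrictScalars ℤ ∧
    (dualLattice B L).map (eζ.restrictScalars ℤ)
      = dualLattice B Lζ ⊓ Vζ.restrictScalars ℤ := by
  subst hL1 hLζ hV1 hVζ heζ
  have hp0 : (p : ℚ) ≠ 0 := Nat.cast_ne_zero.mpr hp.ne_zero
  have hB := BilinForm.nondegenerate_of_pos hBpos
  have he1e1 : IsIdempotentElem e1 := he1 ▸ isIdempotentElem_cyclicAverage hσp hp0
  have he1B : B.IsAdjointPair B e1 e1 := he1 ▸ isAdjointPair_cyclicAverage hσB hσp hp0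
  exact ⟨map_dualLattice_eq hB hLfg he1e1 he1B,
    map_dualLattice_eq hB hLfg he1e1.one_sub (isAdjointPair_one.sub he1B)⟩

/-- `L^# e₁` is the dual of `L₁ = L ∩ V₁` taken inside `V₁`, and `L^# e_ζ` is the dual of
`L_ζ = L ∩ V_ζ` taken inside `V_ζ`. -/
theorem dual_proj_components
    {V : Type*} [AddCommGroup V] [Module ℚ V] [FiniteDimensional ℚ V]
    (B : V →ₗ[ℚ] V →ₗ[ℚ] ℚ)
    (hBsymm : ∀ x y, B x y = B y x)
    (hBpos : ∀ x, x ≠ 0 → 0 < B x x)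
    (L : Submodule ℤ V) (hLfg : L.FG)
    (hLfull : Submodule.span ℚ (L : Set V) = ⊤)
    -- `σ` is an automorphism of `L` of prime order `p`
    (p : ℕ) (hp : p.Prime)
    (σ : Module.End ℚ V)
    (hσB : ∀ x y, B (σ x) (σ y) = B x y)
    (hσL : ∀ v, σ v ∈ L ↔ v ∈ L)
    (hσp : σ ^ p = 1) (hσ1 : σ ≠ 1)
    -- the idempotents `e₁`, `e_ζ` and the eigenspaces `V₁`, `V_ζ`
    (e1 eζ : Module.End ℚ V)
    (he1 : e1 = (p : ℚ)⁻¹ • ∑ i ∈ Finset.range p, σ ^ i)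
    (heζ : eζ = 1 - e1)
    (V1 Vζ : Submodule ℚ V)
    (hV1 : V1 = LinearMap.range e1) (hVζ : Vζ = LinearMap.range eζ)
    (L1 Lζ : Submodule ℤ V)
    (hL1 : L1 = L ⊓ V1.restrictScalars ℤ)
    (hLζ : Lζ = L ⊓ Vζ.restrictScalars ℤ) :
    (dualLattice B L).map (e1.restrictScalars ℤ)
      = dualLattice B L1 ⊓ V1.restrictScalars ℤ ∧
    (dualLattice B L).map (eζ.restrictScalars ℤ)
      = dualLattice B Lζ ⊓ Vζ.restrictScalars ℤ :=
  dual_proj_components_general B hBpos L hLfg p hp σ hσB hσp e1 eζ he1 heζ V1 Vζ hV1 hVζ L1 Lζ hL1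
    hLζ
end

section
/- Let L be a lattice in V and σ ∈ Aut(L) of prime order p. Then, as subgroups of V, one has the chain of inclusions p·(L e₁) + (L e_ζ)(1−σ) ⊆ L₁ + L_ζ ⊆ L ⊆ L e₁ + L e_ζ, where (L e_ζ)(1−σ) denotes the image of L e_ζ under the endomorphism 1−σ, and the sums L₁ + L_ζ and L e₁ + L e_ζ are orthogonal direct sums. -/
/-
Since σ^p = 1, the average e₁ = (1/p)(1 + σ + ⋯ + σ^{p−1}) satisfies σ e₁ = e₁ σ = e₁, so it is an
idempotent with σ-fixed image, and V = V₁ ⊕ V_ζ. For σ-fixed `u` the isometry σ gives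
`B u (σⁱ w) = B u w`, hence `B u (e₁ w) = B u w`, i.e. `u ⟂ e_ζ w`. On the lattice side
`p·e₁ l = ∑ σⁱ l` and `(1 − σ) e_ζ l = l − σ l` both lie in `L`, and `l = e₁ l + e_ζ l`.
-/

open Submodule

open Finset

section PowAverage

variable (K : Type*) {A : Type*} [Field K] [Ring A] [Algebra K A]

def powAverage (x : A) (p : ℕ) : A := (p : K)⁻¹ • ∑ i ∈ range p, x ^ i

variable {K} {x : A} {p : ℕ}

theorem mul_powAverage (h : x ^ p = 1) : x * powAverage K x p = powAverage K x p := by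
  have hsum := mul_neg_geom_sum x p
  rw [h, sub_self, sub_mul, one_mul, sub_eq_zero] at hsum
  rw [powAverage, mul_smul_comm, ← hsum]

theorem powAverage_mul (h : x ^ p = 1) : powAverage K x p * x = powAverage K x p := by
  have hsum := geom_sum_mul_neg x p
  rw [h, sub_self, mul_sub, mul_one, sub_eq_zero] at hsum
  rw [powAverage, smul_mul_assoc, ← hsum]

theorem pow_mul_powAverage (h : x ^ p = 1) (i : ℕ) :
    x ^ i * powAverage K x p = powAverage K x p := by
  induction i with
  | zero => rw [pow_zero, one_mul]
  | succ i ih => rw [pow_succ, mul_assoc, mul_powAverage h, ih]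

theorem natCast_smul_powAverage (hp : (p : K) ≠ 0) :
    (p : K) • powAverage K x p = ∑ i ∈ range p, x ^ i :=
  smul_inv_smul₀ hp _

theorem isIdempotentElem_powAverage (h : x ^ p = 1) (hp : (p : K) ≠ 0) :
    IsIdempotentElem (powAverage K x p) := by
  have hsum : (∑ i ∈ range p, x ^ i) * powAverage K x p = (p : K) • powAverage K x p := by
    rw [sum_mul, sum_congr rfl fun i _ => pow_mul_powAverage h i, sum_const, card_range,
      Nat.cast_smul_eq_nsmul]
  rw [IsIdempotentElem]
  nth_rw 1 [powAverage]
  rw [smul_mul_assoc, hsum, inv_smul_smul₀ hp]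

theorem one_sub_mul_one_sub_powAverage (h : x ^ p = 1) :
    (1 - x) * (1 - powAverage K x p) = 1 - x := by
  rw [mul_sub, mul_one, sub_mul, one_mul, mul_powAverage h, sub_self, sub_zero]

theorem one_sub_powAverage_mul_one_sub (h : x ^ p = 1) :
    (1 - powAverage K x p) * (1 - x) = 1 - x := by
  rw [sub_mul, one_mul, mul_sub, mul_one, powAverage_mul h, sub_self, sub_zero]

end PowAverage

section Isometry

variable {K V : Type*} [Field K] [AddCommGroup V] [Module K V] {σ : Module.End K V} {p : ℕ}
  {B : V →ₗ[K] V →ₗ[K] K}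

theorem apply_pow_right_of_fixed (hσB : ∀ x y, B (σ x) (σ y) = B x y) {u : V} (hu : σ u = u)
    (w : V) (i : ℕ) : B u ((σ ^ i) w) = B u w := by
  induction i with
  | zero => rfl
  | succ i ih =>
    calc B u ((σ ^ (i + 1)) w) = B (σ u) (σ ((σ ^ i) w)) := by
          rw [hu, pow_succ', Module.End.mul_apply]
      _ = B u w := by rw [hσB, ih]

theorem apply_powAverage_right_of_fixed (hσB : ∀ x y, B (σ x) (σ y) = B x y)
    (hp : (p : K) ≠ 0) {u : V} (hu : σ u = u) (w : V) : B u (powAverage K σ p w) = B u w := by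
  rw [powAverage, LinearMap.smul_apply, LinearMap.sum_apply, map_smul, map_sum,
    sum_congr rfl fun i _ => apply_pow_right_of_fixed hσB hu w i, sum_const, card_range,
    ← Nat.cast_smul_eq_nsmul K, inv_smul_smul₀ hp]

theorem apply_eq_zero_of_mem_range_powAverage (hσB : ∀ x y, B (σ x) (σ y) = B x y)
    (hσp : σ ^ p = 1) (hp : (p : K) ≠ 0) {u w : V}
    (hu : u ∈ LinearMap.range (powAverage K σ p))
    (hw : w ∈ LinearMap.range (1 - powAverage K σ p)) : B u w = 0 := by
  obtain ⟨u, rfl⟩ := hu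
  obtain ⟨w, rfl⟩ := hw
  have hfix : σ (powAverage K σ p u) = powAverage K σ p u :=
    LinearMap.congr_fun (mul_powAverage hσp) u
  rw [LinearMap.sub_apply, Module.End.one_apply, map_sub,
    apply_powAverage_right_of_fixed hσB hp hfix, sub_self]

end Isometry

section Lattice

variable {K V : Type*} [Field K] [AddCommGroup V] [Module K V] {σ : Module.End K V} {p : ℕ}
  {L : Submodule ℤ V}

theorem pow_apply_mem (hσL : ∀ v ∈ L, σ v ∈ L) (i : ℕ) {v : V} (hv : v ∈ L) :
    (σ ^ i) v ∈ L := by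
  induction i with
  | zero => exact hv
  | succ i ih => rw [pow_succ', Module.End.mul_apply]; exact hσL _ ih

theorem natCast_zsmul_powAverage_apply_mem (hσL : ∀ v ∈ L, σ v ∈ L) (hσp : σ ^ p = 1)
    (hp : (p : K) ≠ 0) {v : V} (hv : v ∈ L) :
    (p : ℤ) • powAverage K σ p v ∈
      L ⊓ (LinearMap.range (powAverage K σ p)).restrictScalars ℤ := by
  have hsum : (p : ℤ) • powAverage K σ p v = ∑ i ∈ range p, (σ ^ i) v := by
    rw [← Int.cast_smul_eq_zsmul K, Int.cast_natCast, ← LinearMap.smul_apply,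
      natCast_smul_powAverage hp, LinearMap.sum_apply]
  refine ⟨hsum ▸ Submodule.sum_mem L fun i _ => pow_apply_mem hσL i hv,
    (p : ℤ) • powAverage K σ p v, ?_⟩
  rw [map_zsmul, ← Module.End.mul_apply, (isIdempotentElem_powAverage hσp hp).eq]

theorem one_sub_apply_one_sub_powAverage_apply_mem (hσL : ∀ v ∈ L, σ v ∈ L) (hσp : σ ^ p = 1)
    {v : V} (hv : v ∈ L) : (1 - σ) ((1 - powAverage K σ p) v) ∈
      L ⊓ (LinearMap.range (1 - powAverage K σ p)).restrictScalars ℤ := by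
  rw [← Module.End.mul_apply, one_sub_mul_one_sub_powAverage hσp]
  refine ⟨?_, (1 - σ) v, ?_⟩
  · rw [LinearMap.sub_apply, Module.End.one_apply]
    exact sub_mem hv (hσL v hv)
  · rw [← Module.End.mul_apply, one_sub_powAverage_mul_one_sub hσp]

theorem le_map_restrictScalars_sup_map_one_sub (L : Submodule ℤ V) (e : Module.End K V) :
    L ≤ L.map (e.restrictScalars ℤ) ⊔ L.map ((1 - e).restrictScalars ℤ) := fun v hv =>
  Submodule.mem_sup.mpr ⟨e v, Submodule.mem_map_of_mem hv, (1 - e) v, Submodule.mem_map_of_mem hv,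
    add_sub_cancel (e v) v⟩

theorem map_restrictScalars_le_range (L : Submodule ℤ V) (e : Module.End K V) :
    L.map (e.restrictScalars ℤ) ≤ (LinearMap.range e).restrictScalars ℤ := by
  rintro _ ⟨v, -, rfl⟩
  exact ⟨v, rfl⟩

theorem orthogonal_and_inf_eq_bot_of_le_range_powAverage {B : V →ₗ[K] V →ₗ[K] K}
    (hσB : ∀ x y, B (σ x) (σ y) = B x y) (hσp : σ ^ p = 1) (hp : (p : K) ≠ 0)
    {M N : Submodule ℤ V} (hM : M ≤ (LinearMap.range (powAverage K σ p)).restrictScalars ℤ)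
    (hN : N ≤ (LinearMap.range (1 - powAverage K σ p)).restrictScalars ℤ) :
    (∀ x ∈ M, ∀ y ∈ N, B x y = 0) ∧ M ⊓ N = ⊥ := by
  refine ⟨fun x hx y hy =>
    apply_eq_zero_of_mem_range_powAverage hσB hσp hp (hM hx) (hN hy), ?_⟩
  refine eq_bot_iff.mpr fun x hx => (Submodule.mem_bot ℤ).mpr ?_
  have hx' : x ∈ LinearMap.range (powAverage K σ p) ⊓
      LinearMap.range (1 - powAverage K σ p) := ⟨hM hx.1, hN hx.2⟩
  have hidem := isIdempotentElem_powAverage hσp hp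
  rwa [← LinearMap.IsIdempotentElem.ker_eq_range_one_sub hidem,
    (LinearMap.IsIdempotentElem.isCompl hidem).inf_eq_bot, Submodule.mem_bot] at hx'

end Lattice

theorem sublattice_chain_general
    {V : Type*} [AddCommGroup V] [Module ℚ V]
    (B : V →ₗ[ℚ] V →ₗ[ℚ] ℚ)
    (L : Submodule ℤ V)
    (p : ℕ) (hp : p.Prime)
    (σ : Module.End ℚ V)
    (hσB : ∀ x y, B (σ x) (σ y) = B x y)
    (hσL : ∀ v, σ v ∈ L ↔ v ∈ L)
    (hσp : σ ^ p = 1)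
    (e1 eζ : Module.End ℚ V)
    (he1 : e1 = (p : ℚ)⁻¹ • ∑ i ∈ Finset.range p, σ ^ i)
    (heζ : eζ = 1 - e1)
    (V1 Vζ : Submodule ℚ V)
    (hV1 : V1 = LinearMap.range e1) (hVζ : Vζ = LinearMap.range eζ)
    (L1 Lζ : Submodule ℤ V)
    (hL1 : L1 = L ⊓ V1.restrictScalars ℤ)
    (hLζ : Lζ = L ⊓ Vζ.restrictScalars ℤ)
    (Le1 Leζ : Submodule ℤ V)
    (hLe1 : Le1 = L.map (e1.restrictScalars ℤ))
    (hLeζ : Leζ = L.map (eζ.restrictScalars ℤ)) :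
    -- the chain of inclusions
    (Le1.map (((p : ℤ) • (LinearMap.id : V →ₗ[ℤ] V)))
        ⊔ Leζ.map ((1 - σ).restrictScalars ℤ) ≤ L1 ⊔ Lζ) ∧
    (L1 ⊔ Lζ ≤ L) ∧ (L ≤ Le1 ⊔ Leζ) ∧
    -- both sums are orthogonal direct sums
    (∀ x ∈ L1, ∀ y ∈ Lζ, B x y = 0) ∧ (L1 ⊓ Lζ = ⊥) ∧
    (∀ x ∈ Le1, ∀ y ∈ Leζ, B x y = 0) ∧ (Le1 ⊓ Leζ = ⊥) := by
  have hp0 : (p : ℚ) ≠ 0 := Nat.cast_ne_zero.mpr hp.ne_zero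
  have hσL' : ∀ v ∈ L, σ v ∈ L := fun v hv => (hσL v).mpr hv
  change e1 = powAverage ℚ σ p at he1
  subst he1 heζ hV1 hVζ hL1 hLζ hLe1 hLeζ
  obtain ⟨hLorth, hLinf⟩ :=
    orthogonal_and_inf_eq_bot_of_le_range_powAverage hσB hσp hp0 inf_le_right inf_le_right
  obtain ⟨hLeorth, hLeinf⟩ := orthogonal_and_inf_eq_bot_of_le_range_powAverage hσB hσp hp0
    (map_restrictScalars_le_range L _) (map_restrictScalars_le_range L _)
  refine ⟨sup_le ?_ ?_, sup_le inf_le_left inf_le_left,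
    le_map_restrictScalars_sup_map_one_sub L _, hLorth, hLinf, hLeorth, hLeinf⟩
  · rintro _ ⟨_, ⟨v, hv, rfl⟩, rfl⟩
    exact Submodule.mem_sup_left (natCast_zsmul_powAverage_apply_mem hσL' hσp hp0 hv)
  · rintro _ ⟨_, ⟨v, hv, rfl⟩, rfl⟩
    exact Submodule.mem_sup_right (one_sub_apply_one_sub_powAverage_apply_mem hσL' hσp hv)

/-- The chain of inclusions
`p·(L e₁) + (L e_ζ)(1−σ) ⊆ L₁ + L_ζ ⊆ L ⊆ L e₁ + L e_ζ`, where both sums are orthogonal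
direct sums. -/
theorem sublattice_chain
    {V : Type*} [AddCommGroup V] [Module ℚ V] [FiniteDimensional ℚ V]
    (B : V →ₗ[ℚ] V →ₗ[ℚ] ℚ)
    (hBsymm : ∀ x y, B x y = B y x)
    (hBpos : ∀ x, x ≠ 0 → 0 < B x x)
    (L : Submodule ℤ V) (hLfg : L.FG)
    (hLfull : Submodule.span ℚ (L : Set V) = ⊤)
    (p : ℕ) (hp : p.Prime)
    (σ : Module.End ℚ V)
    (hσB : ∀ x y, B (σ x) (σ y) = B x y)
    (hσL : ∀ v, σ v ∈ L ↔ v ∈ L)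
    (hσp : σ ^ p = 1) (hσ1 : σ ≠ 1)
    (e1 eζ : Module.End ℚ V)
    (he1 : e1 = (p : ℚ)⁻¹ • ∑ i ∈ Finset.range p, σ ^ i)
    (heζ : eζ = 1 - e1)
    (V1 Vζ : Submodule ℚ V)
    (hV1 : V1 = LinearMap.range e1) (hVζ : Vζ = LinearMap.range eζ)
    (L1 Lζ : Submodule ℤ V)
    (hL1 : L1 = L ⊓ V1.restrictScalars ℤ)
    (hLζ : Lζ = L ⊓ Vζ.restrictScalars ℤ)
    (Le1 Leζ : Submodule ℤ V)
    (hLe1 : Le1 = L.map (e1.restrictScalars ℤ))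
    (hLeζ : Leζ = L.map (eζ.restrictScalars ℤ)) :
    -- the chain of inclusions
    (Le1.map (((p : ℤ) • (LinearMap.id : V →ₗ[ℤ] V)))
        ⊔ Leζ.map ((1 - σ).restrictScalars ℤ) ≤ L1 ⊔ Lζ) ∧
    (L1 ⊔ Lζ ≤ L) ∧ (L ≤ Le1 ⊔ Leζ) ∧
    -- both sums are orthogonal direct sums
    (∀ x ∈ L1, ∀ y ∈ Lζ, B x y = 0) ∧ (L1 ⊓ Lζ = ⊥) ∧
    (∀ x ∈ Le1, ∀ y ∈ Leζ, B x y = 0) ∧ (Le1 ⊓ Leζ = ⊥) :=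
  sublattice_chain_general B L p hp σ hσB hσL hσp e1 eζ he1 heζ V1 Vζ hV1 hVζ L1 Lζ hL1 hLζ Le1 Leζ
    hLe1 hLeζ
end

section
/- Let M be an even lattice in V such that the finite abelian group M^#/M has exponent 2d with d odd. Then M contains a sublattice N of 2-power index such that (x,y) ∈ 2ℤ for all x,y ∈ N and, letting U denote the lattice N equipped with the bilinear form (1/2)·(,), U is integral and the exponent of U^#/U equals d. Moreover, N can be chosen such that either N = M or U is odd, i.e. (1/2)(λ,λ) is an odd integer for some λ ∈ N. -/
/-!
Everything is local at `2`, which is encoded by `oddSaturation`: `S` and `oddSaturation S` agree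
after tensoring with `ℤ_(2)`. Since `B` is even and the `2`-part of `M^#/M` is killed by `2`, the
`2`-adic lattice `M` is an orthogonal sum of binary blocks on which `B` is unimodular and a part on
which `B` is `2` times a unimodular form. A block is split off from a pair `x, y` with `B x y` odd,
normalised so that `B x x / 2` is odd; inside it, `span {x, 2y}` has index `2` and `½B` has Gram
matrix `[[s, u], [u, 4t]]` there, odd and of odd determinant. Recursing on the orthogonal
complement, whose rank drops, yields `S` with `½B` integral and `2`-adically unimodular on it, and
`N = M ⊓ oddSaturation S` is the required lattice: the factor `2` of the exponent of `M^#/M`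
disappears while the odd part `d` is untouched.
-/

open Submodule Module
open LinearMap (BilinForm)

section IntModule

variable {M : Type*} [AddCommGroup M]

/-- The preimage in `M` of `S ⊗ ℤ_(2)`. -/
def oddSaturation (S : Submodule ℤ M) : Submodule ℤ M where
  carrier := {v | ∃ c : ℤ, Odd c ∧ c • v ∈ S}
  zero_mem' := ⟨1, odd_one, by simp⟩
  add_mem' := by
    rintro v w ⟨c, hc, hv⟩ ⟨c', hc', hw⟩
    refine ⟨c * c', hc.mul hc', ?_⟩
    rw [smul_add, mul_comm, mul_smul, mul_comm, mul_smul]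
    exact add_mem (S.smul_mem c' hv) (S.smul_mem c hw)
  smul_mem' := by
    rintro n v ⟨c, hc, hv⟩
    exact ⟨c, hc, by rw [smul_comm]; exact S.smul_mem n hv⟩

variable {S T : Submodule ℤ M}

lemma le_oddSaturation : S ≤ oddSaturation S :=
  fun v hv => ⟨1, odd_one, by simpa using hv⟩

lemma oddSaturation_mono (h : S ≤ T) : oddSaturation S ≤ oddSaturation T :=
  fun _ ⟨c, hc, hv⟩ => ⟨c, hc, h hv⟩

lemma odd_smul_mem_oddSaturation_iff {c : ℤ} (hc : Odd c) {v : M} :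
    c • v ∈ oddSaturation S ↔ v ∈ oddSaturation S := by
  refine ⟨fun ⟨c', hc', hv⟩ => ⟨c' * c, hc'.mul hc, by rwa [mul_smul]⟩, fun hv => ?_⟩
  exact (oddSaturation S).smul_mem c hv

lemma inf_oddSaturation_self : S ⊓ oddSaturation S = S :=
  inf_eq_left.mpr le_oddSaturation

lemma smul_mem_of_isCoprime {N : Submodule ℤ M} {a b : ℤ} (h : IsCoprime a b) {v : M}
    (ha : a • v ∈ N) (hb : b • v ∈ N) : v ∈ N := by
  obtain ⟨p, q, hpq⟩ := h
  have : v = p • a • v + q • b • v := by rw [smul_smul, smul_smul, ← add_smul, hpq, one_smul]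
  rw [this]
  exact add_mem (N.smul_mem p ha) (N.smul_mem q hb)

lemma exists_card_map_mkQ_eq_pow {p : ℕ} [hp : Fact p.Prime]
    {L N : Submodule ℤ M} (hL : L.FG) {a : ℕ} (h : ∀ z ∈ L, (p ^ a : ℤ) • z ∈ N) :
    ∃ k : ℕ, Nat.card (L.map N.mkQ) = p ^ k := by
  have hkill (q : L.map N.mkQ) : p ^ a • q = 0 := by
    obtain ⟨_, z, hz, rfl⟩ := q
    apply Subtype.ext
    change p ^ a • N.mkQ z = 0
    rw [mkQ_apply, ← Quotient.mk_smul, ← natCast_zsmul, Quotient.mk_eq_zero]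
    exact_mod_cast h z hz
  have : AddGroup.FG (L.map N.mkQ) :=
    Module.Finite.iff_addGroup_fg.mp (Module.Finite.iff_fg.mpr (hL.map _))
  have : Finite (L.map N.mkQ) := AddCommGroup.finite_of_fg_isAddTorsion _ fun q =>
    isOfFinAddOrder_iff_nsmul_eq_zero.mpr ⟨p ^ a, pow_pos hp.out.pos a, hkill q⟩
  exact (IsPGroup.iff_card (G := Multiplicative (L.map N.mkQ))).mp fun q => ⟨a, hkill q.toAdd⟩

lemma two_smul_mem_span_pair {x y p : M} (hp : p ∈ span ℤ {x, y}) :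
    (2 : ℤ) • p ∈ span ℤ {x, (2 : ℤ) • y} := by
  obtain ⟨a, b, rfl⟩ := mem_span_pair.mp hp
  exact mem_span_pair.mpr ⟨2 * a, b, by module⟩

end IntModule

section

variable {V : Type*} [AddCommGroup V] [Module ℚ V] {B : BilinForm ℚ V}
  {L L' : Submodule ℤ V} {W : Submodule ℚ V} {x y : V} {s t u : ℤ}

lemma mem_dualLattice {v : V} : v ∈ dualLattice B L ↔ ∀ l ∈ L, ∃ k : ℤ, B v l = k := Iff.rfl

lemma mem_dualLattice_half {v : V} :
    v ∈ dualLattice ((2⁻¹ : ℚ) • B) L ↔ ∀ l ∈ L, ∃ k : ℤ, B v l = 2 * k := by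
  simp only [mem_dualLattice, LinearMap.smul_apply, smul_eq_mul]
  refine forall₂_congr fun l _ => exists_congr fun k => ?_
  constructor <;> intro h <;> linarith

lemma dualLattice_anti (h : L ≤ L') : dualLattice B L' ≤ dualLattice B L :=
  fun _ hv l hl => hv l (h hl)

lemma dualLattice_sup : dualLattice B (L ⊔ L') = dualLattice B L ⊓ dualLattice B L' := by
  refine le_antisymm (le_inf (dualLattice_anti le_sup_left) (dualLattice_anti le_sup_right)) ?_
  rintro v ⟨hv, hv'⟩ _ hsum
  obtain ⟨l, hl, l', hl', rfl⟩ := mem_sup.mp hsum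
  obtain ⟨k, hk⟩ := hv l hl
  obtain ⟨k', hk'⟩ := hv' l' hl'
  exact ⟨k + k', by simp [hk, hk']⟩

lemma mem_dualLattice_span {A : Set V} {v : V} (h : ∀ l ∈ A, ∃ k : ℤ, B v l = k) :
    v ∈ dualLattice B (span ℤ A) := by
  intro l hl
  induction hl using span_induction with
  | mem l hl => exact h l hl
  | zero => exact ⟨0, by simp⟩
  | add a b _ _ ha hb =>
    obtain ⟨m, hm⟩ := ha
    obtain ⟨n, hn⟩ := hb
    exact ⟨m + n, by simp [hm, hn]⟩
  | smul c a _ ha =>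
    obtain ⟨m, hm⟩ := ha
    exact ⟨c * m, by simp [hm]⟩

lemma span_le_dualLattice_span {A : Set V} (h : ∀ a ∈ A, ∀ b ∈ A, ∃ k : ℤ, B a b = k) :
    span ℤ A ≤ dualLattice B (span ℤ A) :=
  span_le.mpr fun a ha => mem_dualLattice_span (h a ha)

lemma sup_le_dualLattice_sup (hL : L ≤ dualLattice B L) (hL' : L' ≤ dualLattice B L')
    (horth : ∀ l ∈ L, ∀ l' ∈ L', B l l' = 0 ∧ B l' l = 0) :
    L ⊔ L' ≤ dualLattice B (L ⊔ L') := by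
  rw [dualLattice_sup]
  exact sup_le (le_inf hL fun l hl l' hl' => ⟨0, by simp [(horth l hl l' hl').1]⟩)
    (le_inf (fun l' hl' l hl => ⟨0, by simp [(horth l hl l' hl').2]⟩) hL')

lemma le_dualLattice_of_even (hB : ∀ x y, B x y = B y x)
    (heven : ∀ z ∈ L, ∃ k : ℤ, B z z = 2 * k) : L ≤ dualLattice B L := by
  intro z hz w hw
  obtain ⟨a, ha⟩ := heven (z + w) (add_mem hz hw)
  obtain ⟨b, hb⟩ := heven z hz
  obtain ⟨c, hc⟩ := heven w hw
  refine ⟨a - b - c, ?_⟩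
  simp only [map_add, LinearMap.add_apply, hB w z] at ha
  push_cast
  linarith

lemma two_smul_mem_dualLattice_half (hL : L ≤ L') {w : V} (hw : w ∈ dualLattice B L') :
    (2 : ℤ) • w ∈ dualLattice ((2⁻¹ : ℚ) • B) L := by
  intro l hl
  obtain ⟨k, hk⟩ := hw l (hL hl)
  exact ⟨k, by simp [hk]⟩

lemma mem_dualLattice_of_add_mem {a b : V} (ha : ∀ z ∈ L, B a z = 0)
    (h : a + b ∈ dualLattice B L) : b ∈ dualLattice B L :=
  fun z hz => by simpa [ha z hz] using h z hz

lemma mem_orthogonal_span_pair {m : V} :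
    m ∈ B.orthogonal (span ℚ {x, y}) ↔ B x m = 0 ∧ B y m = 0 := by
  refine ⟨fun h => ⟨h x (subset_span (by simp)), h y (subset_span (by simp))⟩, ?_⟩
  rintro ⟨hx, hy⟩ n hn
  obtain ⟨a, b, rfl⟩ := mem_span_pair.mp hn
  simp [hx, hy]

/-- Cramer's rule: the subtracted vector is the orthogonal projection of `z` to `span {x, y}`,
scaled by the Gram determinant of `x, y`. -/
lemma gram_smul_sub_mem_orthogonal (hB : ∀ x y, B x y = B y x) (x y z : V) :
    (B x x * B y y - B x y ^ 2) • z
      - ((B y y * B z x - B x y * B z y) • x + (B x x * B z y - B x y * B z x) • y)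
      ∈ B.orthogonal (span ℚ {x, y}) := by
  rw [mem_orthogonal_span_pair]
  constructor <;> simp only [map_sub, map_add, map_smul, smul_eq_mul, hB x z, hB y z, hB y x] <;>
    ring

lemma gram_smul_eq_of_mem_span_pair (hB : ∀ x y, B x y = B y x) {w : V}
    (hw : w ∈ span ℚ {x, y}) :
    (B x x * B y y - B x y ^ 2) • w
      = (B y y * B w x - B x y * B w y) • x + (B x x * B w y - B x y * B w x) • y := by
  obtain ⟨a, b, rfl⟩ := mem_span_pair.mp hw
  simp only [map_add, map_smul, LinearMap.add_apply, LinearMap.smul_apply, smul_eq_mul, hB y x]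
  module

def orthogonalLattice (B : BilinForm ℚ V) (W : Submodule ℚ V) (L : Submodule ℤ V) :
    Submodule ℤ V :=
  L ⊓ (B.orthogonal W).restrictScalars ℤ

lemma orthogonalLattice_le : orthogonalLattice B W L ≤ L := inf_le_left

lemma span_orthogonalLattice_le : span ℚ (orthogonalLattice B W L : Set V) ≤ B.orthogonal W :=
  span_le.mpr fun _ hz => (mem_inf.mp hz).2

lemma finrank_span_orthogonalLattice_lt [FiniteDimensional ℚ V] (hx : x ∈ L)
    (hy : y ∈ W) (hyx : B y x ≠ 0) :
    finrank ℚ (span ℚ (orthogonalLattice B W L : Set V)) < finrank ℚ (span ℚ (L : Set V)) :=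
  finrank_lt_finrank_of_lt <| SetLike.lt_iff_le_and_exists.mpr
    ⟨span_mono fun _ hz => (mem_inf.mp hz).1, x, subset_span hx,
      fun h => hyx (span_orthogonalLattice_le h y hy)⟩

lemma span_pair_two_smul_le : span ℤ {x, (2 : ℤ) • y} ≤ (span ℚ {x, y}).restrictScalars ℤ :=
  span_le.mpr <| Set.insert_subset_iff.mpr ⟨subset_span (by simp), Set.singleton_subset_iff.mpr
    (smul_of_tower_mem _ (2 : ℤ) (subset_span (by simp) : y ∈ span ℚ {x, y}))⟩

lemma odd_four_mul_sub_sq (hu : Odd u) : Odd (4 * s * t - u ^ 2) :=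
  Even.sub_odd ⟨2 * s * t, by ring⟩ (hu.pow)

lemma exists_smul_sub_mem_orthogonalLattice (hB : ∀ x y, B x y = B y x)
    (hL : L ≤ dualLattice B L) (hx : x ∈ L) (hy : y ∈ L)
    (hxx : B x x = 2 * s) (hyy : B y y = 2 * t) (hxy : B x y = u) {z : V} (hz : z ∈ L) :
    ∃ p ∈ span ℤ {x, y}, (4 * s * t - u ^ 2) • z - p ∈ orthogonalLattice B (span ℚ {x, y}) L := by
  obtain ⟨k₁, hk₁⟩ := hL hz x hx
  obtain ⟨k₂, hk₂⟩ := hL hz y hy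
  have hp : (2 * t * k₁ - u * k₂) • x + (2 * s * k₂ - u * k₁) • y ∈ span ℤ {x, y} :=
    mem_span_pair.mpr ⟨_, _, rfl⟩
  refine ⟨_, hp, mem_inf.mpr ⟨sub_mem (L.smul_mem _ hz) (span_le.mpr ?_ hp), ?_⟩⟩
  · simp [Set.insert_subset_iff, hx, hy]
  · have h := gram_smul_sub_mem_orthogonal hB x y z
    rw [hxx, hyy, hxy, hk₁, hk₂] at h
    rw [restrictScalars_mem]
    convert h using 2 <;> simp only [← Int.cast_smul_eq_zsmul ℚ] <;> push_cast <;> module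

lemma smul_mem_span_pair_of_mem_dualLattice (hB : ∀ x y, B x y = B y x)
    (hxx : B x x = 2 * s) (hyy : B y y = 2 * t) (hxy : B x y = u) {w : V}
    (hw : w ∈ span ℚ {x, y})
    (hdual : w ∈ dualLattice ((2⁻¹ : ℚ) • B) (span ℤ {x, (2 : ℤ) • y})) :
    (4 * s * t - u ^ 2) • w ∈ span ℤ {x, (2 : ℤ) • y} := by
  obtain ⟨k₁, hk₁⟩ := mem_dualLattice_half.mp hdual x (subset_span (by simp))
  obtain ⟨k₂, hk₂⟩ := mem_dualLattice_half.mp hdual ((2 : ℤ) • y) (subset_span (by simp))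
  have hwy : B w y = k₂ := by
    rw [← Int.cast_smul_eq_zsmul ℚ, map_smul, smul_eq_mul] at hk₂
    push_cast at hk₂
    linarith
  have h := gram_smul_eq_of_mem_span_pair hB hw
  rw [hxx, hyy, hxy, hk₁, hwy] at h
  refine mem_span_pair.mpr ⟨4 * t * k₁ - u * k₂, s * k₂ - u * k₁, ?_⟩
  simp only [← Int.cast_smul_eq_zsmul ℚ] at h ⊢
  push_cast at h ⊢
  rw [show (4 * s * t - u ^ 2 : ℚ) = 2 * s * (2 * t) - u ^ 2 by ring, h]
  module

lemma span_le_sup_span_orthogonalLattice (hB : ∀ x y, B x y = B y x)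
    (hL : L ≤ dualLattice B L) (hx : x ∈ L) (hy : y ∈ L)
    (hxx : B x x = 2 * s) (hyy : B y y = 2 * t) (hxy : B x y = u) (hu : Odd u) :
    span ℚ (L : Set V) ≤
      span ℚ {x, y} ⊔ span ℚ (orthogonalLattice B (span ℚ {x, y}) L : Set V) := by
  refine span_le.mpr fun z hz => ?_
  obtain ⟨p, hp, hm⟩ := exists_smul_sub_mem_orthogonalLattice hB hL hx hy hxx hyy hxy hz
  have hD : ((4 * s * t - u ^ 2 : ℤ) : ℚ) ≠ 0 := by
    have hodd := odd_four_mul_sub_sq (s := s) (t := t) hu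
    exact Int.cast_ne_zero.mpr fun h => by simp [h] at hodd
  rw [SetLike.mem_coe, ← smul_mem_iff _ hD, Int.cast_smul_eq_zsmul, ← sub_add_cancel (_ • z) p]
  exact add_mem (mem_sup_right (subset_span hm)) (mem_sup_left (span_le_restrictScalars ℤ ℚ _ hp))

/-- The `2`-part of `L^#/L` is killed by `2`; the dual is cut down to `span ℚ L`, so that `L`
need not have full rank. -/
def IsTwoElementaryAtTwo (B : BilinForm ℚ V) (L : Submodule ℤ V) : Prop :=
  ∀ v ∈ span ℚ (L : Set V), v ∈ dualLattice B L → (2 : ℤ) • v ∈ oddSaturation L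

/-- Locally at `2`: `S` has `2`-power index in `L`, and `½B` is integral and unimodular on `S`;
moreover `½B` is odd on `S` unless `S = L`. -/
structure IsHalvingSublattice (B : BilinForm ℚ V) (L S : Submodule ℤ V) : Prop where
  le : S ≤ L
  exists_two_pow_smul_mem : ∃ a : ℕ, ∀ z ∈ L, (2 ^ a : ℤ) • z ∈ oddSaturation S
  le_dualLattice : S ≤ dualLattice ((2⁻¹ : ℚ) • B) S
  mem_oddSaturation_of_mem_dualLattice :
    ∀ v ∈ span ℚ (L : Set V), v ∈ dualLattice ((2⁻¹ : ℚ) • B) S → v ∈ oddSaturation S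
  eq_or_exists_odd : S = L ∨ ∃ l ∈ S, ∃ k : ℤ, Odd k ∧ B l l = 2 * k

lemma isHalvingSublattice_self (hL : L ≤ dualLattice ((2⁻¹ : ℚ) • B) L)
    (h2 : IsTwoElementaryAtTwo B L) : IsHalvingSublattice B L L where
  le := le_rfl
  exists_two_pow_smul_mem := ⟨0, fun z hz => le_oddSaturation (by simpa using hz)⟩
  le_dualLattice := hL
  mem_oddSaturation_of_mem_dualLattice v hv hdual := by
    have h := h2 ((2⁻¹ : ℚ) • v) (smul_mem _ _ hv) fun l hl => by simpa using hdual l hl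
    rwa [← Int.cast_smul_eq_zsmul ℚ, smul_smul, Int.cast_two, mul_inv_cancel₀ two_ne_zero,
      one_smul] at h
  eq_or_exists_odd := Or.inl rfl

lemma IsTwoElementaryAtTwo.orthogonalLattice (h2 : IsTwoElementaryAtTwo B L)
    (hB : ∀ x y, B x y = B y x) (hL : L ≤ dualLattice B L) (hx : x ∈ L) (hy : y ∈ L)
    (hxx : B x x = 2 * s) (hyy : B y y = 2 * t) (hxy : B x y = u) (hu : Odd u) :
    IsTwoElementaryAtTwo B (orthogonalLattice B (span ℚ {x, y}) L) := by
  intro v hv hdual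
  have hvW := span_orthogonalLattice_le hv
  have hDv : (4 * s * t - u ^ 2) • v ∈ dualLattice B L := by
    intro z hz
    obtain ⟨p, hp, hm⟩ := exists_smul_sub_mem_orthogonalLattice hB hL hx hy hxx hyy hxy hz
    obtain ⟨k, hk⟩ := hdual _ hm
    have hvp : B v p = 0 := by rw [hB]; exact hvW p (span_le_restrictScalars ℤ ℚ _ hp)
    refine ⟨k, ?_⟩
    rw [map_zsmul, LinearMap.smul_apply, ← map_zsmul, ← sub_add_cancel (_ • z) p, map_add, hk,
      hvp, add_zero]
  obtain ⟨c, hc, hcv⟩ := h2 _ (smul_of_tower_mem _ _ (span_mono orthogonalLattice_le hv)) hDv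
  rw [← odd_smul_mem_oddSaturation_iff (odd_four_mul_sub_sq hu), smul_comm]
  exact ⟨c, hc, mem_inf.mpr ⟨hcv, smul_of_tower_mem _ _ (smul_of_tower_mem _ _
    (smul_of_tower_mem _ _ hvW))⟩⟩

lemma exists_odd_pair (hB : ∀ x y, B x y = B y x) (hL : L ≤ dualLattice B L)
    (heven : ∀ z ∈ L, ∃ k : ℤ, B z z = 2 * k) (hhalf : ¬ L ≤ dualLattice ((2⁻¹ : ℚ) • B) L) :
    ∃ x ∈ L, ∃ y ∈ L, ∃ s t u : ℤ,
      B x x = 2 * s ∧ B y y = 2 * t ∧ B x y = u ∧ Odd s ∧ Odd u := by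
  obtain ⟨x, hx, y, hy, hxy⟩ : ∃ x ∈ L, ∃ y ∈ L, ¬ ∃ k : ℤ, B x y = 2 * k := by
    simpa [SetLike.le_def, mem_dualLattice_half] using hhalf
  obtain ⟨u, hu⟩ := hL hx y hy
  have hu_odd : Odd u := Int.not_even_iff_odd.mp fun ⟨k, hk⟩ =>
    hxy ⟨k, by rw [hu, hk]; push_cast; ring⟩
  obtain ⟨s, hs⟩ := heven x hx
  obtain ⟨t, ht⟩ := heven y hy
  rcases Int.even_or_odd s with hs_even | hs_odd
  · rcases Int.even_or_odd t with ht_even | ht_odd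
    -- `B (x + y) (x + y) / 2 = s + t + u` is odd
    · refine ⟨x + y, add_mem hx hy, y, hy, s + t + u, t, u + 2 * t, ?_, ht, ?_,
        (hs_even.add ht_even).add_odd hu_odd, hu_odd.add_even (even_two_mul t)⟩
      · simp only [map_add, LinearMap.add_apply, hs, ht, hu, hB y x]
        push_cast
        ring
      · simp only [map_add, LinearMap.add_apply, hu, ht]
        push_cast
        ring
    · exact ⟨y, hy, x, hx, t, s, u, ht, hs, by rw [hB, hu], ht_odd, hu_odd⟩
  · exact ⟨x, hx, y, hy, s, t, u, hs, ht, hu, hs_odd, hu_odd⟩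

lemma IsHalvingSublattice.sup_span_pair (hB : ∀ x y, B x y = B y x)
    (hL : L ≤ dualLattice B L) (hx : x ∈ L) (hy : y ∈ L)
    (hxx : B x x = 2 * s) (hyy : B y y = 2 * t) (hxy : B x y = u) (hs : Odd s) (hu : Odd u)
    {S : Submodule ℤ V} (hS : IsHalvingSublattice B (orthogonalLattice B (span ℚ {x, y}) L) S) :
    IsHalvingSublattice B L (span ℤ {x, (2 : ℤ) • y} ⊔ S) where
  le := sup_le (span_le.mpr (Set.insert_subset_iff.mpr ⟨hx, by simpa using L.smul_mem 2 hy⟩))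
    (hS.le.trans orthogonalLattice_le)
  exists_two_pow_smul_mem := by
    obtain ⟨a, ha⟩ := hS.exists_two_pow_smul_mem
    refine ⟨a + 1, fun z hz => ?_⟩
    obtain ⟨p, hp, hm⟩ := exists_smul_sub_mem_orthogonalLattice hB hL hx hy hxx hyy hxy hz
    rw [← odd_smul_mem_oddSaturation_iff (odd_four_mul_sub_sq hu), smul_comm,
      ← sub_add_cancel (_ • z) p, smul_add]
    refine add_mem ?_ ?_
    · rw [pow_succ', mul_smul]
      exact smul_mem _ _ (oddSaturation_mono le_sup_right (ha _ hm))
    · rw [pow_succ, mul_smul]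
      exact smul_mem _ _ (le_oddSaturation (mem_sup_left (two_smul_mem_span_pair hp)))
  le_dualLattice := by
    refine sup_le_dualLattice_sup (span_le_dualLattice_span ?_) hS.le_dualLattice
      fun p hp m hm => ?_
    · simp only [Set.mem_insert_iff, Set.mem_singleton_iff, forall_eq_or_imp, forall_eq]
      refine ⟨⟨⟨s, by simp [hxx]⟩, ⟨u, by simp [hxy]⟩⟩, ⟨u, by simp [hB y x, hxy]⟩,
        ⟨4 * t, by simp [hyy]; ring⟩⟩
    · have hpm : B p m = 0 := (mem_inf.mp (hS.le hm)).2 p (span_pair_two_smul_le hp)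
      simp [hpm, hB m p]
  mem_oddSaturation_of_mem_dualLattice v hv hdual := by
    obtain ⟨w, hw, m, hm, rfl⟩ :=
      mem_sup.mp (span_le_sup_span_orthogonalLattice hB hL hx hy hxx hyy hxy hu hv)
    rw [dualLattice_sup] at hdual
    have hmS : m ∈ dualLattice ((2⁻¹ : ℚ) • B) S := mem_dualLattice_of_add_mem
      (fun z hz => by simp [(mem_inf.mp (hS.le hz)).2 w hw]) hdual.2
    have hwP : w ∈ dualLattice ((2⁻¹ : ℚ) • B) (span ℤ {x, (2 : ℤ) • y}) := by
      refine mem_dualLattice_of_add_mem (fun p hp => ?_) (add_comm w m ▸ hdual.1)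
      simp [hB m p, span_orthogonalLattice_le hm p (span_pair_two_smul_le hp)]
    refine add_mem ?_ (oddSaturation_mono le_sup_right
      (hS.mem_oddSaturation_of_mem_dualLattice m hm hmS))
    rw [← odd_smul_mem_oddSaturation_iff (odd_four_mul_sub_sq hu)]
    exact le_oddSaturation
      (mem_sup_left (smul_mem_span_pair_of_mem_dualLattice hB hxx hyy hxy hw hwP))
  eq_or_exists_odd := Or.inr ⟨x, mem_sup_left (subset_span (by simp)), s, hs, hxx⟩

theorem exists_isHalvingSublattice [FiniteDimensional ℚ V] (hB : ∀ x y, B x y = B y x)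
    (heven : ∀ z ∈ L, ∃ k : ℤ, B z z = 2 * k) (h2 : IsTwoElementaryAtTwo B L) :
    ∃ S, IsHalvingSublattice B L S := by
  induction hn : finrank ℚ (span ℚ (L : Set V)) using Nat.strong_induction_on generalizing L
    with | _ n ih =>
  have hL := le_dualLattice_of_even hB heven
  by_cases hhalf : L ≤ dualLattice ((2⁻¹ : ℚ) • B) L
  · exact ⟨L, isHalvingSublattice_self hhalf h2⟩
  obtain ⟨x, hx, y, hy, s, t, u, hxx, hyy, hxy, hs, hu⟩ := exists_odd_pair hB hL heven hhalf
  have hyx : B y x ≠ 0 := by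
    rw [hB, hxy]
    exact Int.cast_ne_zero.mpr fun h => by simp [h] at hu
  obtain ⟨S, hS⟩ := ih _ (hn ▸ finrank_span_orthogonalLattice_lt hx (subset_span (by simp)) hyx)
    (fun z hz => heven z (orthogonalLattice_le hz))
    (h2.orthogonalLattice hB hL hx hy hxx hyy hxy hu) rfl
  exact ⟨_, hS.sup_span_pair hB hL hx hy hxx hyy hxy hs hu⟩

namespace IsHalvingSublattice

variable {S : Submodule ℤ V}

lemma exists_two_pow_smul_mem_inf (h : IsHalvingSublattice B L S) :
    ∃ a : ℕ, ∀ z ∈ L, (2 ^ a : ℤ) • z ∈ L ⊓ oddSaturation S := by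
  obtain ⟨a, ha⟩ := h.exists_two_pow_smul_mem
  exact ⟨a, fun z hz => mem_inf.mpr ⟨L.smul_mem _ hz, ha z hz⟩⟩

lemma exists_card_map_mkQ_eq_two_pow (h : IsHalvingSublattice B L S) (hfg : L.FG) :
    ∃ k : ℕ, Nat.card (L.map (L ⊓ oddSaturation S).mkQ) = 2 ^ k := by
  obtain ⟨a, ha⟩ := h.exists_two_pow_smul_mem_inf
  exact exists_card_map_mkQ_eq_pow hfg (p := 2) (by exact_mod_cast ha)

lemma inf_le_dualLattice (h : IsHalvingSublattice B L S) (hL : L ≤ dualLattice B L) :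
    L ⊓ oddSaturation S ≤ dualLattice ((2⁻¹ : ℚ) • B) (L ⊓ oddSaturation S) := by
  rintro z ⟨hzL, c, hc, hcz⟩
  refine mem_dualLattice_half.mpr ?_
  rintro w ⟨hwL, c', hc', hcw⟩
  obtain ⟨k, hk⟩ := hL hzL w hwL
  obtain ⟨k', hk'⟩ := mem_dualLattice_half.mp (h.le_dualLattice hcz) _ hcw
  have hcck : c * c' * k = 2 * k' := by
    simp only [map_zsmul, LinearMap.smul_apply, hk, zsmul_eq_mul] at hk'
    have hcck : ((c * c' * k : ℤ) : ℚ) = 2 * k' := by push_cast; linarith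
    exact_mod_cast hcck
  obtain ⟨j, hj⟩ := (Int.even_mul.mp ⟨k', by rw [hcck]; ring⟩).resolve_left
    (Int.not_even_iff_odd.mpr (hc.mul hc'))
  exact ⟨j, by rw [hk, hj]; push_cast; ring⟩

lemma smul_mem_inf_of_mem_dualLattice (h : IsHalvingSublattice B L S)
    (hfull : span ℚ (L : Set V) = ⊤) {e : ℤ} (hexp : ∀ v ∈ dualLattice B L, (2 * e) • v ∈ L) {v : V}
    (hv : v ∈ dualLattice ((2⁻¹ : ℚ) • B) (L ⊓ oddSaturation S)) :
    e • v ∈ L ⊓ oddSaturation S := by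
  obtain ⟨a, ha⟩ := h.exists_two_pow_smul_mem_inf
  have hSN : S ≤ L ⊓ oddSaturation S := le_inf h.le le_oddSaturation
  obtain ⟨c, hc, hcv⟩ := h.mem_oddSaturation_of_mem_dualLattice v (hfull ▸ mem_top)
    (dualLattice_anti hSN hv)
  have h2v : (2 ^ a : ℤ) • v ∈ dualLattice B L := fun z hz => by
    obtain ⟨k, hk⟩ := mem_dualLattice_half.mp hv _ (ha z hz)
    exact ⟨2 * k, by rw [map_zsmul, LinearMap.smul_apply, ← map_zsmul, hk]; push_cast; ring⟩
  -- `e • v` has the odd multiple `c • e • v` and the multiple `2 ^ (2a+1) • e • v` in the lattice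
  refine smul_mem_of_isCoprime ((Int.isCoprime_two_right.mpr hc).pow_right (n := 2 * a + 1))
    ?_ ?_
  · rw [smul_comm]
    exact smul_mem _ _ (hSN hcv)
  · convert ha _ (hexp _ h2v) using 1
    rw [smul_smul, smul_smul, smul_smul]
    ring_nf

lemma inf_eq_or_exists_odd (h : IsHalvingSublattice B L S) :
    L ⊓ oddSaturation S = L ∨ ∃ l ∈ L ⊓ oddSaturation S, ∃ k : ℤ, Odd k ∧ B l l = 2 * k :=
  h.eq_or_exists_odd.imp (fun hSL => by rw [hSL]; exact inf_oddSaturation_self)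
    fun ⟨l, hl, k, hk, hkl⟩ => ⟨l, ⟨h.le hl, le_oddSaturation hl⟩, k, hk, hkl⟩

end IsHalvingSublattice

end

theorem sublattice_with_halved_form_general
    {V : Type*} [AddCommGroup V] [Module ℚ V] [FiniteDimensional ℚ V]
    (B : V →ₗ[ℚ] V →ₗ[ℚ] ℚ)
    (hBsymm : ∀ x y, B x y = B y x)
    (M : Submodule ℤ V) (hMfg : M.FG)
    (hMfull : Submodule.span ℚ (M : Set V) = ⊤)
    -- `M` is even
    (hMeven : ∀ v ∈ M, ∃ k : ℤ, B v v = 2 * k)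
    -- `M^#/M` has exponent `2d` with `d` odd
    (d : ℕ) (hdodd : Odd d)
    (hexp : ∀ v ∈ dualLattice B M, ((2 * d : ℕ) : ℤ) • v ∈ M)
    (hexpmin : ∀ e : ℕ, 0 < e → (∀ v ∈ dualLattice B M, (e : ℤ) • v ∈ M) → 2 * d ≤ e) :
    ∃ N : Submodule ℤ V, N ≤ M ∧
      -- `N` has `2`-power index in `M`
      (∃ k : ℕ, Nat.card (M.map N.mkQ) = 2 ^ k) ∧
      -- all values `(x, y)` for `x, y ∈ N` lie in `2ℤ`, i.e. `U = ^{(1/2)}N` is integral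
      (∀ x ∈ N, ∀ y ∈ N, ∃ k : ℤ, B x y = 2 * k) ∧
      -- the exponent of `U^#/U` equals `d` (the dual taken with respect to `(1/2)·B`)
      (∀ v ∈ dualLattice ((2⁻¹ : ℚ) • B) N, (d : ℤ) • v ∈ N) ∧
      (∀ e : ℕ, 0 < e → (∀ v ∈ dualLattice ((2⁻¹ : ℚ) • B) N, (e : ℤ) • v ∈ N) → d ≤ e) ∧
      -- moreover `N = M`, or `U` is odd
      (N = M ∨ ∃ l ∈ N, ∃ k : ℤ, Odd k ∧ B l l = 2 * k) := by
  have hexp' : ∀ v ∈ dualLattice B M, (2 * (d : ℤ)) • v ∈ M := by exact_mod_cast hexp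
  have hM2 : IsTwoElementaryAtTwo B M := fun v _ hv =>
    ⟨d, by exact_mod_cast hdodd, by rw [smul_smul, mul_comm]; exact hexp' v hv⟩
  obtain ⟨S, hS⟩ := exists_isHalvingSublattice hBsymm hMeven hM2
  refine ⟨M ⊓ oddSaturation S, inf_le_left, hS.exists_card_map_mkQ_eq_two_pow hMfg, ?_, ?_, ?_,
    hS.inf_eq_or_exists_odd⟩
  · exact fun x hx => mem_dualLattice_half.mp
      (hS.inf_le_dualLattice (le_dualLattice_of_even hBsymm hMeven) hx)
  · exact fun v hv => hS.smul_mem_inf_of_mem_dualLattice hMfull hexp' hv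
  intro e he hkill
  have h2e : ∀ w ∈ dualLattice B M, ((2 * e : ℕ) : ℤ) • w ∈ M := fun w hw => by
    have := hkill _ (two_smul_mem_dualLattice_half inf_le_left hw)
    rw [smul_smul, mul_comm] at this
    exact_mod_cast inf_le_left (a := M) this
  have := hexpmin (2 * e) (by omega) h2e
  omega

/-- Lemma: if `M` is an even lattice whose discriminant group `M^#/M` has exponent `2d`
with `d` odd, then `M` contains a sublattice `N` of `2`-power index such that
`U = ^{(1/2)}N` is integral with `exp(U^#/U) = d`; moreover `N` can be chosen such that
`N = M` or `U` is odd. -/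
theorem sublattice_with_halved_form
    {V : Type*} [AddCommGroup V] [Module ℚ V] [FiniteDimensional ℚ V]
    (B : V →ₗ[ℚ] V →ₗ[ℚ] ℚ)
    (hBsymm : ∀ x y, B x y = B y x)
    (hBpos : ∀ x, x ≠ 0 → 0 < B x x)
    (M : Submodule ℤ V) (hMfg : M.FG)
    (hMfull : Submodule.span ℚ (M : Set V) = ⊤)
    -- `M` is even
    (hMeven : ∀ v ∈ M, ∃ k : ℤ, B v v = 2 * k)
    -- `M^#/M` has exponent `2d` with `d` odd
    (d : ℕ) (hdodd : Odd d)
    (hexp : ∀ v ∈ dualLattice B M, ((2 * d : ℕ) : ℤ) • v ∈ M)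
    (hexpmin : ∀ e : ℕ, 0 < e → (∀ v ∈ dualLattice B M, (e : ℤ) • v ∈ M) → 2 * d ≤ e) :
    ∃ N : Submodule ℤ V, N ≤ M ∧
      -- `N` has `2`-power index in `M`
      (∃ k : ℕ, Nat.card (M.map N.mkQ) = 2 ^ k) ∧
      -- all values `(x, y)` for `x, y ∈ N` lie in `2ℤ`, i.e. `U = ^{(1/2)}N` is integral
      (∀ x ∈ N, ∀ y ∈ N, ∃ k : ℤ, B x y = 2 * k) ∧
      -- the exponent of `U^#/U` equals `d` (the dual taken with respect to `(1/2)·B`)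
      (∀ v ∈ dualLattice ((2⁻¹ : ℚ) • B) N, (d : ℤ) • v ∈ N) ∧
      (∀ e : ℕ, 0 < e → (∀ v ∈ dualLattice ((2⁻¹ : ℚ) • B) N, (e : ℤ) • v ∈ N) → d ≤ e) ∧
      -- moreover `N = M`, or `U` is odd
      (N = M ∨ ∃ l ∈ N, ∃ k : ℤ, Odd k ∧ B l l = 2 * k) :=
  sublattice_with_halved_form_general B hBsymm M hMfg hMfull hMeven d hdodd hexp hexpmin
end
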